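/- arXiv:math/0106253 — 3 statements merged into one kernel-verified Lean document; each statement's English description precedes it below -/
import Mathlib

section
/- The pairing ω† := (V ⊗ V) ∘ Δ ∘ v⁻¹ : 𝟙 → A ⊗ A (defined like ω but with v and v⁻¹ exchanged) is the two-sided convolution inverse of ω: ω† * ω = ω * ω† = η ⊗ η, where the convolution of α, β : 𝟙 → A ⊗ A is α * β := (m ⊗ m) ∘ (id_A ⊗ c_{A,A} ⊗ id_A) ∘ (α ⊗ β). -/
/-!
Write `V`, `W` for multiplication by `v`, `v⁻¹`. By associativity `V` and `W` are mutually
inverse morphisms of left `A`-modules, and centrality of `v` makes them morphisms of right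
modules too, so `m ∘ (V ⊗ W) = m = m ∘ (W ⊗ V)`. Hence in `ω† * ω` the factors `V` and `W`
cancel in each tensor slot, leaving
`(m ⊗ m)(1 ⊗ c ⊗ 1)(Δ ⊗ Δ)(v⁻¹ ⊗ v) = Δ (v⁻¹ v) = Δ η = η ⊗ η` by the bialgebra axiom;
`ω * ω†` is symmetric.
-/

open CategoryTheory Category MonoidalCategory

universe v u

namespace RibbonPairing

section Multiplication

variable {C : Type u} [Category.{v} C] [MonoidalCategory C] {A : C} (m : A ⊗ A ⟶ A)

def leftMul (p : 𝟙_ C ⟶ A) : A ⟶ A := (λ_ A).inv ≫ (p ▷ A) ≫ m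

def rightMul (p : 𝟙_ C ⟶ A) : A ⟶ A := (ρ_ A).inv ≫ (A ◁ p) ≫ m

theorem point_comp_leftMul (p q : 𝟙_ C ⟶ A) :
    q ≫ leftMul m p = (λ_ (𝟙_ C)).inv ≫ (p ⊗ₘ q) ≫ m := by
  rw [leftMul, leftUnitor_inv_naturality_assoc, tensorHom_def', assoc]

theorem leftMul_unit {η : 𝟙_ C ⟶ A} (h_one_mul : (η ▷ A) ≫ m = (λ_ A).hom) :
    leftMul m η = 𝟙 A := by
  rw [leftMul, h_one_mul, Iso.inv_hom_id]

variable {m} (h_mul_assoc : (m ▷ A) ≫ m = (α_ A A A).hom ≫ (A ◁ m) ≫ m)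
include h_mul_assoc

theorem leftMul_whiskerRight_mul (p : 𝟙_ C ⟶ A) :
    (leftMul m p ▷ A) ≫ m = m ≫ leftMul m p := by
  have hc : ((λ_ A).inv ▷ A) ≫ (α_ (𝟙_ C) A A).hom = (λ_ (A ⊗ A)).inv := by
    monoidal_coherence
  rw [leftMul, comp_whiskerRight, comp_whiskerRight, assoc, assoc, h_mul_assoc,
    associator_naturality_left_assoc, leftUnitor_inv_naturality_assoc,
    whisker_exchange_assoc, reassoc_of% hc]

theorem rightMul_whiskerLeft_mul (p : 𝟙_ C ⟶ A) :
    (A ◁ rightMul m p) ≫ m = m ≫ rightMul m p := by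
  have hm : (A ◁ m) ≫ m = (α_ A A A).inv ≫ (m ▷ A) ≫ m := by
    rw [h_mul_assoc, Iso.inv_hom_id_assoc]
  have hc : (A ◁ (ρ_ A).inv) ≫ (α_ A A (𝟙_ C)).inv = (ρ_ (A ⊗ A)).inv := by
    monoidal_coherence
  rw [rightMul, MonoidalCategory.whiskerLeft_comp, MonoidalCategory.whiskerLeft_comp, assoc, assoc,
    hm, associator_inv_naturality_right_assoc, rightUnitor_inv_naturality_assoc,
    ← whisker_exchange_assoc, reassoc_of% hc]

theorem leftMul_comp_leftMul (p q : 𝟙_ C ⟶ A) :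
    leftMul m p ≫ leftMul m q = leftMul m (p ≫ leftMul m q) := by
  rw [leftMul, assoc, assoc, ← leftMul_whiskerRight_mul h_mul_assoc, ← comp_whiskerRight_assoc]
  rfl

end Multiplication

section Linearity

variable {C : Type u} [Category.{v} C] [MonoidalCategory C] {A : C} {m : A ⊗ A ⟶ A}

theorem whiskerLeft_inv_mul (e : A ≅ A) (h : (A ◁ e.hom) ≫ m = m ≫ e.hom) :
    (A ◁ e.inv) ≫ m = m ≫ e.inv := by
  rw [← cancel_mono e.hom, assoc, assoc, ← h, Iso.inv_hom_id, ← whiskerLeft_comp_assoc,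
    Iso.inv_hom_id, MonoidalCategory.whiskerLeft_id, id_comp, comp_id]

theorem tensorHom_mul {f g : A ⟶ A} (hf : (f ▷ A) ≫ m = m ≫ f)
    (hg : (A ◁ g) ≫ m = m ≫ g) : (f ⊗ₘ g) ≫ m = m ≫ g ≫ f := by
  rw [tensorHom_def', assoc, hf, reassoc_of% hg]

end Linearity

section Convolution

variable {C : Type u} [Category.{v} C] [MonoidalCategory C] [BraidedCategory C] {A : C}

def convolution (m : A ⊗ A ⟶ A) (φ ψ : 𝟙_ C ⟶ A ⊗ A) : 𝟙_ C ⟶ A ⊗ A :=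
  (λ_ (𝟙_ C)).inv ≫ (φ ⊗ₘ ψ) ≫ tensorμ A A A A ≫ (m ⊗ₘ m)

theorem convolution_comul_tensorHom {m : A ⊗ A ⟶ A} {Δ : A ⟶ A ⊗ A}
    (h_compat : m ≫ Δ = (Δ ⊗ₘ Δ) ≫ tensorμ A A A A ≫ (m ⊗ₘ m))
    {f g f' g' : A ⟶ A} (hf : (f ⊗ₘ f') ≫ m = m) (hg : (g ⊗ₘ g') ≫ m = m) (p q : 𝟙_ C ⟶ A) :
    convolution m (p ≫ Δ ≫ (f ⊗ₘ g)) (q ≫ Δ ≫ (f' ⊗ₘ g')) =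
      ((λ_ (𝟙_ C)).inv ≫ (p ⊗ₘ q) ≫ m) ≫ Δ := by
  calc convolution m (p ≫ Δ ≫ (f ⊗ₘ g)) (q ≫ Δ ≫ (f' ⊗ₘ g'))
      = (λ_ (𝟙_ C)).inv ≫ (p ⊗ₘ q) ≫ (Δ ⊗ₘ Δ) ≫ tensorμ A A A A ≫
          (((f ⊗ₘ f') ≫ m) ⊗ₘ ((g ⊗ₘ g') ≫ m)) := by
        simp only [convolution, ← tensorHom_comp_tensorHom, assoc, tensorμ_natural_assoc]
    _ = ((λ_ (𝟙_ C)).inv ≫ (p ⊗ₘ q) ≫ m) ≫ Δ := by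
        rw [hf, hg, assoc, assoc, h_compat]

end Convolution

end RibbonPairing

open RibbonPairing in
theorem pairing_convolution_inverse_general
    {C : Type u} [Category.{v} C] [MonoidalCategory C] [BraidedCategory C]
    (A : C) (m : A ⊗ A ⟶ A) (η : 𝟙_ C ⟶ A) (Δ : A ⟶ A ⊗ A)
    (h_mul_assoc : (m ▷ A) ≫ m = (α_ A A A).hom ≫ (A ◁ m) ≫ m)
    (h_one_mul : (η ▷ A) ≫ m = (λ_ A).hom)
    (h_compat : m ≫ Δ = (Δ ⊗ₘ Δ) ≫ tensorμ A A A A ≫ (m ⊗ₘ m))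
    (h_unit_comul : η ≫ Δ = (λ_ (𝟙_ C)).inv ≫ (η ⊗ₘ η))
    (v vinv : 𝟙_ C ⟶ A)
    (h_v_central : (λ_ A).inv ≫ (v ▷ A) ≫ m = (ρ_ A).inv ≫ (A ◁ v) ≫ m)
    (h_v_inv : (λ_ (𝟙_ C)).inv ≫ (v ⊗ₘ vinv) ≫ m = η)
    (h_inv_v : (λ_ (𝟙_ C)).inv ≫ (vinv ⊗ₘ v) ≫ m = η)
    (V W : A ⟶ A)
    (hV : V = (λ_ A).inv ≫ (v ▷ A) ≫ m)
    (hW : W = (λ_ A).inv ≫ (vinv ▷ A) ≫ m)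
    (ω : 𝟙_ C ⟶ A ⊗ A)
    (hω : ω = v ≫ Δ ≫ (W ⊗ₘ W))
    (ωdag : 𝟙_ C ⟶ A ⊗ A)
    (hωdag : ωdag = vinv ≫ Δ ≫ (V ⊗ₘ V))
    : ((λ_ (𝟙_ C)).inv ≫ (ωdag ⊗ₘ ω) ≫ tensorμ A A A A ≫ (m ⊗ₘ m) = (λ_ (𝟙_ C)).inv ≫ (η ⊗ₘ η)) ∧
      ((λ_ (𝟙_ C)).inv ≫ (ω ⊗ₘ ωdag) ≫ tensorμ A A A A ≫ (m ⊗ₘ m) = (λ_ (𝟙_ C)).inv ≫ (η ⊗ₘ η)) := by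
  change V = leftMul m v at hV
  change W = leftMul m vinv at hW
  have hVW : V ≫ W = 𝟙 A := by
    rw [hV, hW, leftMul_comp_leftMul h_mul_assoc, point_comp_leftMul, h_inv_v,
      leftMul_unit m h_one_mul]
  have hWV : W ≫ V = 𝟙 A := by
    rw [hV, hW, leftMul_comp_leftMul h_mul_assoc, point_comp_leftMul, h_v_inv,
      leftMul_unit m h_one_mul]
  have hV_left : (V ▷ A) ≫ m = m ≫ V := hV ▸ leftMul_whiskerRight_mul h_mul_assoc v
  have hW_left : (W ▷ A) ≫ m = m ≫ W := hW ▸ leftMul_whiskerRight_mul h_mul_assoc vinv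
  have hV_right : (A ◁ V) ≫ m = m ≫ V :=
    (hV.trans h_v_central) ▸ rightMul_whiskerLeft_mul h_mul_assoc v
  have hW_right : (A ◁ W) ≫ m = m ≫ W := whiskerLeft_inv_mul ⟨V, W, hVW, hWV⟩ hV_right
  have hVW_mul : (V ⊗ₘ W) ≫ m = m := by rw [tensorHom_mul hV_left hW_right, hWV, comp_id]
  have hWV_mul : (W ⊗ₘ V) ≫ m = m := by rw [tensorHom_mul hW_left hV_right, hVW, comp_id]
  subst hω hωdag
  constructor
  · rw [← h_unit_comul, ← h_inv_v]
    exact convolution_comul_tensorHom h_compat hVW_mul hVW_mul vinv v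
  · rw [← h_unit_comul, ← h_v_inv]
    exact convolution_comul_tensorHom h_compat hWV_mul hWV_mul v vinv

theorem pairing_convolution_inverse
    {C : Type u} [Category.{v} C] [MonoidalCategory C] [BraidedCategory C]
    (A : C) (m : A ⊗ A ⟶ A) (η : 𝟙_ C ⟶ A) (Δ : A ⟶ A ⊗ A) (ε : A ⟶ 𝟙_ C) (Γ : A ⟶ A)
    (h_mul_assoc : (m ▷ A) ≫ m = (α_ A A A).hom ≫ (A ◁ m) ≫ m)
    (h_one_mul : (η ▷ A) ≫ m = (λ_ A).hom)
    (h_mul_one : (A ◁ η) ≫ m = (ρ_ A).hom)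
    (h_comul_assoc : Δ ≫ (Δ ▷ A) ≫ (α_ A A A).hom = Δ ≫ (A ◁ Δ))
    (h_counit_left : Δ ≫ (ε ▷ A) = (λ_ A).inv)
    (h_counit_right : Δ ≫ (A ◁ ε) = (ρ_ A).inv)
    (h_compat : m ≫ Δ = (Δ ⊗ₘ Δ) ≫ tensorμ A A A A ≫ (m ⊗ₘ m))
    (h_unit_comul : η ≫ Δ = (λ_ (𝟙_ C)).inv ≫ (η ⊗ₘ η))
    (h_mul_counit : m ≫ ε = (ε ⊗ₘ ε) ≫ (λ_ (𝟙_ C)).hom)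
    (h_unit_counit : η ≫ ε = 𝟙 (𝟙_ C))
    (h_antipode_left : Δ ≫ (Γ ▷ A) ≫ m = ε ≫ η)
    (h_antipode_right : Δ ≫ (A ◁ Γ) ≫ m = ε ≫ η)
    (v vinv : 𝟙_ C ⟶ A)
    (h_v_central : (λ_ A).inv ≫ (v ▷ A) ≫ m = (ρ_ A).inv ≫ (A ◁ v) ≫ m)
    (h_v_antipode : v ≫ Γ = v)
    (h_v_inv : (λ_ (𝟙_ C)).inv ≫ (v ⊗ₘ vinv) ≫ m = η)
    (h_inv_v : (λ_ (𝟙_ C)).inv ≫ (vinv ⊗ₘ v) ≫ m = η)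
    (V W : A ⟶ A)
    (hV : V = (λ_ A).inv ≫ (v ▷ A) ≫ m)
    (hW : W = (λ_ A).inv ≫ (vinv ▷ A) ≫ m)
    (ω : 𝟙_ C ⟶ A ⊗ A)
    (hω : ω = v ≫ Δ ≫ (W ⊗ₘ W))
    (h_pairing : ω ≫ (A ◁ Δ) =
      ω ≫ ((ρ_ A).inv ▷ A) ≫ ((A ◁ ω) ▷ A) ≫ ((α_ A A A).inv ▷ A) ≫ ((m ▷ A) ▷ A) ≫
        (α_ A A A).hom)
    (ωdag : 𝟙_ C ⟶ A ⊗ A)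
    (hωdag : ωdag = vinv ≫ Δ ≫ (V ⊗ₘ V))
    : ((λ_ (𝟙_ C)).inv ≫ (ωdag ⊗ₘ ω) ≫ tensorμ A A A A ≫ (m ⊗ₘ m) = (λ_ (𝟙_ C)).inv ≫ (η ⊗ₘ η)) ∧
      ((λ_ (𝟙_ C)).inv ≫ (ω ⊗ₘ ωdag) ≫ tensorμ A A A A ≫ (m ⊗ₘ m) = (λ_ (𝟙_ C)).inv ≫ (η ⊗ₘ η)) :=
  pairing_convolution_inverse_general A m η Δ h_mul_assoc h_one_mul h_compat h_unit_comul v vinv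
    h_v_central h_v_inv h_inv_v V W hV hW ω hω ωdag hωdag
end

section
/- A Γ-invariant right integral μ on a Hopf monoid in a braided monoidal category is automatically a two-sided integral: it also satisfies the left integral equation (id_A ⊗ μ) ∘ Δ = η ∘ μ as morphisms A → A. -/
/-
In Sweedler notation: applying the antipode `S` to the right-integral equation
`μ(a₁) a₂ = μ(a) 1`, and using that `S` reverses the comultiplication, gives
`S(a₁) μ(S a₂) = μ(S a) 1`, i.e. `S(a₁) μ(a₂) = μ(a) 1` once `μ ∘ S = μ`. Hence
`a₁ μ(a₂) = a₁ S(a₂) μ(a₃) = ε(a₁) μ(a₂) 1 = μ(a) 1`.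
-/

open CategoryTheory Category MonoidalCategory

universe v u

section

-- Closed before the main theorem, whose binders are named `Δ`, `η`, `ε`, `μ` as well.
open scoped CategoryTheory.MonObj CategoryTheory.ComonObj CategoryTheory.HopfObj

namespace CategoryTheory.HopfObj

variable {C : Type u} [Category.{v} C] [MonoidalCategory C] [BraidedCategory C] {A : C} [HopfObj A]

def IsRightIntegral (φ : A ⟶ 𝟙_ C) : Prop := Δ[A] ≫ (φ ▷ A) ≫ (λ_ A).hom = φ ≫ η[A]

def IsLeftIntegral (φ : A ⟶ 𝟙_ C) : Prop := Δ[A] ≫ (A ◁ φ) ≫ (ρ_ A).hom = φ ≫ η[A]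

theorem comul_whiskerLeft_antipode_tensorHom_mul (φ : A ⟶ 𝟙_ C) :
    Δ[A] ≫ (A ◁ (Δ[A] ≫ (𝒮[A] ⊗ₘ φ) ≫ (ρ_ A).hom)) ≫ μ[A] = φ ≫ η[A] := by
  calc Δ[A] ≫ (A ◁ (Δ[A] ≫ (𝒮[A] ⊗ₘ φ) ≫ (ρ_ A).hom)) ≫ μ[A]
      = Δ[A] ≫ ((Δ[A] ≫ A ◁ 𝒮[A] ≫ μ[A]) ▷ A) ≫ (A ◁ φ) ≫ (ρ_ A).hom := by
        rw [whiskerLeft_comp_assoc, ComonObj.comul_assoc_assoc, MonoidalCategory.tensorHom_def,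
          assoc, whiskerLeft_comp_assoc, whiskerLeft_comp_assoc,
          ← associator_naturality_middle_assoc, comp_whiskerRight, comp_whiskerRight, assoc, assoc,
          ← whisker_exchange_assoc, rightUnitor_naturality]
        simp
    _ = φ ≫ η[A] := by
        rw [antipode_right, comp_whiskerRight, assoc, ComonObj.counit_comul_assoc,
          ← whisker_exchange_assoc]
        simp [← unitors_equal]

theorem isLeftIntegral_of_comul_antipode_tensorHom {φ : A ⟶ 𝟙_ C}
    (h : Δ[A] ≫ (𝒮[A] ⊗ₘ φ) ≫ (ρ_ A).hom = φ ≫ η[A]) : IsLeftIntegral φ := by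
  calc Δ[A] ≫ (A ◁ φ) ≫ (ρ_ A).hom
      = Δ[A] ≫ (A ◁ (φ ≫ η[A])) ≫ μ[A] := by simp
    _ = Δ[A] ≫ (A ◁ (Δ[A] ≫ (𝒮[A] ⊗ₘ φ) ≫ (ρ_ A).hom)) ≫ μ[A] := by rw [h]
    _ = φ ≫ η[A] := comul_whiskerLeft_antipode_tensorHom_mul φ

theorem IsRightIntegral.comul_antipode_tensorHom_antipode_comp {φ : A ⟶ 𝟙_ C}
    (hφ : IsRightIntegral φ) :
    Δ[A] ≫ (𝒮[A] ⊗ₘ (𝒮[A] ≫ φ)) ≫ (ρ_ A).hom = (𝒮[A] ≫ φ) ≫ η[A] := by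
  calc Δ[A] ≫ (𝒮[A] ⊗ₘ (𝒮[A] ≫ φ)) ≫ (ρ_ A).hom
      = Δ[A] ≫ (β_ A A).hom ≫ (𝒮[A] ⊗ₘ 𝒮[A]) ≫ (φ ▷ A) ≫ (λ_ A).hom := by
        rw [← braiding_leftUnitor, BraidedCategory.braiding_naturality_assoc]
        simp [MonoidalCategory.tensorHom_def']
    _ = (𝒮[A] ≫ φ) ≫ η[A] := by rw [← reassoc_of% antipode_comul A, hφ, assoc]

theorem IsRightIntegral.isLeftIntegral {φ : A ⟶ 𝟙_ C} (hφ : IsRightIntegral φ)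
    (h_antipode : 𝒮[A] ≫ φ = φ) : IsLeftIntegral φ :=
  isLeftIntegral_of_comul_antipode_tensorHom <| by
    simpa only [h_antipode] using hφ.comul_antipode_tensorHom_antipode_comp

end CategoryTheory.HopfObj

end

theorem right_integral_is_two_sided
    {C : Type u} [Category.{v} C] [MonoidalCategory C] [BraidedCategory C]
    (A : C) (m : A ⊗ A ⟶ A) (η : 𝟙_ C ⟶ A) (Δ : A ⟶ A ⊗ A) (ε : A ⟶ 𝟙_ C) (Γ : A ⟶ A)
    (h_mul_assoc : (m ▷ A) ≫ m = (α_ A A A).hom ≫ (A ◁ m) ≫ m)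
    (h_one_mul : (η ▷ A) ≫ m = (λ_ A).hom)
    (h_mul_one : (A ◁ η) ≫ m = (ρ_ A).hom)
    (h_comul_assoc : Δ ≫ (Δ ▷ A) ≫ (α_ A A A).hom = Δ ≫ (A ◁ Δ))
    (h_counit_left : Δ ≫ (ε ▷ A) = (λ_ A).inv)
    (h_counit_right : Δ ≫ (A ◁ ε) = (ρ_ A).inv)
    (h_compat : m ≫ Δ = (Δ ⊗ₘ Δ) ≫ tensorμ A A A A ≫ (m ⊗ₘ m))
    (h_unit_comul : η ≫ Δ = (λ_ (𝟙_ C)).inv ≫ (η ⊗ₘ η))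
    (h_mul_counit : m ≫ ε = (ε ⊗ₘ ε) ≫ (λ_ (𝟙_ C)).hom)
    (h_unit_counit : η ≫ ε = 𝟙 (𝟙_ C))
    (h_antipode_left : Δ ≫ (Γ ▷ A) ≫ m = ε ≫ η)
    (h_antipode_right : Δ ≫ (A ◁ Γ) ≫ m = ε ≫ η)
    (μ : A ⟶ 𝟙_ C)
    (h_integral : Δ ≫ (μ ▷ A) ≫ (λ_ A).hom = μ ≫ η)
    (h_mu_antipode : Γ ≫ μ = μ)
    : Δ ≫ (A ◁ μ) ≫ (ρ_ A).hom = μ ≫ η := by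
  let _ : HopfObj A :=
    { one := η, mul := m, one_mul := h_one_mul, mul_one := h_mul_one, mul_assoc := h_mul_assoc
      counit := ε, comul := Δ, counit_comul := h_counit_left, comul_counit := h_counit_right
      comul_assoc := h_comul_assoc.symm, mul_comul := h_compat, one_comul := h_unit_comul
      mul_counit := by simpa using h_mul_counit, one_counit := h_unit_counit
      antipode := Γ, antipode_left := h_antipode_left, antipode_right := h_antipode_right }
  exact HopfObj.IsRightIntegral.isLeftIntegral (A := A) h_integral h_mu_antipode
end

section
/- If ω is non-degenerate in the weak sense, then the dual integral λ := (id_A ⊗ μ) ∘ ω : 𝟙 → A is a two-sided integral element: m ∘ (id_A ⊗ λ) = λ ∘ ε = m ∘ (λ ⊗ id_A) as morphisms A → A. -/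
open CategoryTheory Category MonoidalCategory

universe v u

/-!
In Sweedler notation write `ω = ω₁ ⊗ ω₂` and `λ_φ = ω₁ φ(ω₂)`. Applying a functional `φ` to the
middle, resp. last, leg of the pairing axiom `ω₁ ⊗ Δ(ω₂) = ω₁ω₁' ⊗ ω₂' ⊗ ω₂` gives
`ω₁ ⊗ φ(ω₂⁽¹⁾) ω₂⁽²⁾ = ω₁ λ_φ ⊗ ω₂` and `ω₁ ⊗ ω₂⁽¹⁾ φ(ω₂⁽²⁾) = λ_φ ω₁ ⊗ ω₂`.

For `φ = ε` the first identity says that right multiplication by `λ_ε` is the identity once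
tested against `ω`, so `λ_ε = 1` by non-degeneracy. Since `ω = v⁻¹v⁽¹⁾ ⊗ v⁻¹v⁽²⁾` and `ε` is
multiplicative, `ε(ω₁)ω₂` and `ω₁ε(ω₂)` both equal `ε(v⁻¹) v⁻¹v` (a braiding lets the scalar
pass from one side to the other), hence `ε(ω₁)ω₂ = 1` as well.

For `φ = μ`, right invariance turns the left-hand side of the first identity into `λ ⊗ 1`.
Because the antipode reverses the comultiplication and is an epimorphism fixing `μ`, the right
integral `μ` is also a left integral, and the second left-hand side becomes `λ ⊗ 1` too. As
`ε(ω₁)λ ⊗ ω₂ = λ ⊗ 1`, non-degeneracy gives `xλ = ε(x)λ = λx`.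
-/

namespace HopfPairing

open scoped MonObj ComonObj HopfObj

variable {C : Type u} [Category.{v} C] [MonoidalCategory C] {A : C}

def leftMul [MonObj A] (x : 𝟙_ C ⟶ A) : A ⟶ A := (λ_ A).inv ≫ (x ▷ A) ≫ μ[A]

def rightMul [MonObj A] (x : 𝟙_ C ⟶ A) : A ⟶ A := (ρ_ A).inv ≫ (A ◁ x) ≫ μ[A]

def contractLeft (ω : 𝟙_ C ⟶ A ⊗ A) (φ : A ⟶ 𝟙_ C) : 𝟙_ C ⟶ A := ω ≫ (φ ▷ A) ≫ (λ_ A).hom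

def contractRight (ω : 𝟙_ C ⟶ A ⊗ A) (φ : A ⟶ 𝟙_ C) : 𝟙_ C ⟶ A :=
  ω ≫ (A ◁ φ) ≫ (ρ_ A).hom

/-- `x ↦ x ω₁ ⊗ ω₂`. -/
def mulLeftLeg [MonObj A] (ω : 𝟙_ C ⟶ A ⊗ A) : A ⟶ A ⊗ A :=
  (ρ_ A).inv ≫ (A ◁ ω) ≫ (α_ A A A).inv ≫ (μ[A] ▷ A)

def IsOneSidedPairing [MonObj A] [ComonObj A] (ω : 𝟙_ C ⟶ A ⊗ A) : Prop :=
  ω ≫ (A ◁ Δ[A]) = ω ≫ (mulLeftLeg ω ▷ A) ≫ (α_ A A A).hom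

def IsWeaklyNondegenerate (ω : 𝟙_ C ⟶ A ⊗ A) : Prop :=
  ∀ f g : A ⟶ A, ω ≫ (f ▷ A) = ω ≫ (g ▷ A) → f = g

def IsRightIntegral [MonObj A] [ComonObj A] (φ : A ⟶ 𝟙_ C) : Prop :=
  Δ[A] ≫ (φ ▷ A) ≫ (λ_ A).hom = φ ≫ η[A]

def IsLeftIntegral [MonObj A] [ComonObj A] (φ : A ⟶ 𝟙_ C) : Prop :=
  Δ[A] ≫ (A ◁ φ) ≫ (ρ_ A).hom = φ ≫ η[A]

theorem one_comp_rightMul [MonObj A] (x : 𝟙_ C ⟶ A) : η[A] ≫ rightMul x = x := by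
  rw [rightMul, rightUnitor_inv_naturality_assoc, ← whisker_exchange_assoc, MonObj.one_mul,
    leftUnitor_naturality, ← unitors_inv_equal, Iso.inv_hom_id_assoc]

theorem comp_mulLeftLeg [MonObj A] (x : 𝟙_ C ⟶ A) (ω : 𝟙_ C ⟶ A ⊗ A) :
    x ≫ mulLeftLeg ω = ω ≫ (leftMul x ▷ A) := by
  rw [mulLeftLeg, rightUnitor_inv_naturality_assoc, ← whisker_exchange_assoc,
    associator_inv_naturality_left_assoc, ← comp_whiskerRight, ← unitors_inv_equal,
    ← leftUnitor_inv_naturality_assoc, leftUnitor_tensor_inv]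
  simp [leftMul]

theorem mulLeftLeg_whiskerLeft_rightUnitor [MonObj A] (ω : 𝟙_ C ⟶ A ⊗ A) (φ : A ⟶ 𝟙_ C) :
    mulLeftLeg ω ≫ (A ◁ φ) ≫ (ρ_ A).hom = rightMul (contractRight ω φ) := by
  simp only [mulLeftLeg, assoc, ← whisker_exchange_assoc, rightUnitor_naturality]
  simp [rightMul, contractRight]

theorem comul_whiskerRight_eq_rightMul_contractRight [MonObj A] [ComonObj A]
    {ω : 𝟙_ C ⟶ A ⊗ A} (hω : IsOneSidedPairing ω)
    (φ : A ⟶ 𝟙_ C) :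
    ω ≫ (A ◁ (Δ[A] ≫ (φ ▷ A) ≫ (λ_ A).hom)) = ω ≫ (rightMul (contractRight ω φ) ▷ A) := by
  rw [← mulLeftLeg_whiskerLeft_rightUnitor]
  simp only [MonoidalCategory.whiskerLeft_comp, reassoc_of% hω]
  simp

theorem comul_whiskerLeft_eq_leftMul_contractRight [MonObj A] [ComonObj A]
    {ω : 𝟙_ C ⟶ A ⊗ A} (hω : IsOneSidedPairing ω)
    (φ : A ⟶ 𝟙_ C) :
    ω ≫ (A ◁ (Δ[A] ≫ (A ◁ φ) ≫ (ρ_ A).hom)) = ω ≫ (leftMul (contractRight ω φ) ▷ A) := by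
  rw [← comp_mulLeftLeg, contractRight]
  simp only [MonoidalCategory.whiskerLeft_comp, reassoc_of% hω, ← associator_naturality_right_assoc,
    ← rightUnitor_tensor_hom, ← whisker_exchange_assoc, rightUnitor_naturality, assoc]

theorem contractRight_counit [MonObj A] [ComonObj A] {ω : 𝟙_ C ⟶ A ⊗ A}
    (hω : IsOneSidedPairing ω) (hnd : IsWeaklyNondegenerate ω) :
    contractRight ω ε[A] = η[A] := by
  have h : rightMul (contractRight ω ε[A]) = 𝟙 A :=
    hnd _ _ (by rw [← comul_whiskerRight_eq_rightMul_contractRight hω]; simp)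
  rw [← one_comp_rightMul (contractRight ω ε[A]), h, comp_id]

theorem whiskerRight_comp_contractRight (ω : 𝟙_ C ⟶ A ⊗ A) (e φ : A ⟶ 𝟙_ C) :
    ω ≫ ((e ≫ contractRight ω φ) ▷ A) = ω ≫ (A ◁ (φ ≫ contractLeft ω e)) := by
  have hl : ω ≫ (e ▷ A) = contractLeft ω e ≫ (λ_ A).inv := by simp [contractLeft]
  have hr : ω ≫ (A ◁ φ) = contractRight ω φ ≫ (ρ_ A).inv := by simp [contractRight]
  rw [comp_whiskerRight, reassoc_of% hl, MonoidalCategory.whiskerLeft_comp, reassoc_of% hr,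
    leftUnitor_inv_naturality_assoc, whisker_exchange, unitors_inv_equal,
    ← rightUnitor_inv_naturality_assoc]

theorem rightMul_contractRight_of_isRightIntegral [MonObj A] [ComonObj A]
    {ω : 𝟙_ C ⟶ A ⊗ A} (hω : IsOneSidedPairing ω) (hnd : IsWeaklyNondegenerate ω)
    (hε : contractLeft ω ε[A] = η[A]) {φ : A ⟶ 𝟙_ C} (hφ : IsRightIntegral φ) :
    rightMul (contractRight ω φ) = ε[A] ≫ contractRight ω φ :=
  hnd _ _ <| by
    rw [← comul_whiskerRight_eq_rightMul_contractRight hω, hφ, whiskerRight_comp_contractRight, hε]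

theorem leftMul_contractRight_of_isLeftIntegral [MonObj A] [ComonObj A]
    {ω : 𝟙_ C ⟶ A ⊗ A} (hω : IsOneSidedPairing ω) (hnd : IsWeaklyNondegenerate ω)
    (hε : contractLeft ω ε[A] = η[A]) {φ : A ⟶ 𝟙_ C} (hφ : IsLeftIntegral φ) :
    leftMul (contractRight ω φ) = ε[A] ≫ contractRight ω φ :=
  hnd _ _ <| by
    rw [← comul_whiskerLeft_eq_leftMul_contractRight hω, hφ, whiskerRight_comp_contractRight, hε]

theorem comul_tensorHom_counit_whiskerRight [ComonObj A] {B : C} {f : A ⟶ A} {g : A ⟶ B}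
    {s : 𝟙_ C ⟶ 𝟙_ C} (hf : f ≫ ε[A] = ε[A] ≫ s) :
    Δ[A] ≫ (f ⊗ₘ g) ≫ (ε[A] ▷ B) ≫ (λ_ B).hom = g ≫ (λ_ B).inv ≫ (s ▷ B) ≫ (λ_ B).hom := by
  rw [MonoidalCategory.tensorHom_def, assoc, whisker_exchange_assoc, ← comp_whiskerRight_assoc, hf,
    comp_whiskerRight_assoc, ComonObj.counit_comul_assoc, ← whisker_exchange_assoc,
    ← leftUnitor_inv_naturality_assoc]

theorem comul_tensorHom_counit_whiskerLeft [ComonObj A] {B : C} {f : A ⟶ A} {g : A ⟶ B}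
    {s : 𝟙_ C ⟶ 𝟙_ C} (hf : f ≫ ε[A] = ε[A] ≫ s) :
    Δ[A] ≫ (g ⊗ₘ f) ≫ (B ◁ ε[A]) ≫ (ρ_ B).hom = g ≫ (ρ_ B).inv ≫ (B ◁ s) ≫ (ρ_ B).hom := by
  rw [MonoidalCategory.tensorHom_def', assoc, ← whisker_exchange_assoc,
    ← MonoidalCategory.whiskerLeft_comp_assoc, hf, MonoidalCategory.whiskerLeft_comp_assoc,
    ComonObj.comul_counit_assoc, whisker_exchange_assoc, ← rightUnitor_inv_naturality_assoc]

section Braided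

variable [BraidedCategory C]

theorem leftUnitor_conj_whiskerRight_eq (X : C) (s : 𝟙_ C ⟶ 𝟙_ C) :
    (λ_ X).inv ≫ (s ▷ X) ≫ (λ_ X).hom = (ρ_ X).inv ≫ (X ◁ s) ≫ (ρ_ X).hom := by
  rw [← braiding_rightUnitor, BraidedCategory.braiding_naturality_left_assoc,
    leftUnitor_inv_braiding_assoc]

theorem leftMul_counit [BimonObj A] (y : 𝟙_ C ⟶ A) : leftMul y ≫ ε[A] = ε[A] ≫ y ≫ ε[A] := by
  rw [leftMul, assoc, assoc, Bimon.mul_counit, MonoidalCategory.tensorHom_def, assoc,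
    ← comp_whiskerRight_assoc, ← whisker_exchange_assoc, ← leftUnitor_inv_naturality_assoc,
    unitors_equal, rightUnitor_naturality, unitors_inv_equal, Iso.inv_hom_id_assoc]

theorem contractLeft_counit_eq_contractRight_counit [BimonObj A] {ω : 𝟙_ C ⟶ A ⊗ A}
    {x y : 𝟙_ C ⟶ A} (hω : ω = x ≫ Δ[A] ≫ (leftMul y ⊗ₘ leftMul y)) :
    contractLeft ω ε[A] = contractRight ω ε[A] := by
  subst hω
  simp only [contractLeft, contractRight, assoc]
  rw [comul_tensorHom_counit_whiskerRight (leftMul_counit y),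
    comul_tensorHom_counit_whiskerLeft (leftMul_counit y), leftUnitor_conj_whiskerRight_eq]

theorem antipode_comp_comul_whiskerLeft [HopfObj A] (φ : A ⟶ 𝟙_ C) :
    𝒮[A] ≫ Δ[A] ≫ (A ◁ φ) ≫ (ρ_ A).hom = Δ[A] ≫ ((𝒮[A] ≫ φ) ▷ A) ≫ (λ_ A).hom ≫ 𝒮[A] := by
  rw [reassoc_of% HopfObj.antipode_comul, MonoidalCategory.tensorHom_def, assoc,
    ← MonoidalCategory.whiskerLeft_comp_assoc, ← whisker_exchange_assoc, rightUnitor_naturality,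
    ← BraidedCategory.braiding_naturality_left_assoc, braiding_rightUnitor_assoc]

theorem IsRightIntegral.isLeftIntegral [HopfObj A] [Epi 𝒮[A]] {φ : A ⟶ 𝟙_ C}
    (hφ : IsRightIntegral φ) (hS : 𝒮[A] ≫ φ = φ) : IsLeftIntegral φ := by
  rw [IsLeftIntegral, ← cancel_epi 𝒮[A], antipode_comp_comul_whiskerLeft, hS, reassoc_of% hφ,
    HopfObj.one_antipode, reassoc_of% hS]

end Braided

end HopfPairing

open HopfPairing

theorem dual_integral_is_two_sided_integral_general
    {C : Type u} [Category.{v} C] [MonoidalCategory C] [BraidedCategory C]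
    (A : C) (m : A ⊗ A ⟶ A) (η : 𝟙_ C ⟶ A) (Δ : A ⟶ A ⊗ A) (ε : A ⟶ 𝟙_ C) (Γ : A ⟶ A)
    (h_mul_assoc : (m ▷ A) ≫ m = (α_ A A A).hom ≫ (A ◁ m) ≫ m)
    (h_one_mul : (η ▷ A) ≫ m = (λ_ A).hom)
    (h_mul_one : (A ◁ η) ≫ m = (ρ_ A).hom)
    (h_comul_assoc : Δ ≫ (Δ ▷ A) ≫ (α_ A A A).hom = Δ ≫ (A ◁ Δ))
    (h_counit_left : Δ ≫ (ε ▷ A) = (λ_ A).inv)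
    (h_counit_right : Δ ≫ (A ◁ ε) = (ρ_ A).inv)
    (h_compat : m ≫ Δ = (Δ ⊗ₘ Δ) ≫ tensorμ A A A A ≫ (m ⊗ₘ m))
    (h_unit_comul : η ≫ Δ = (λ_ (𝟙_ C)).inv ≫ (η ⊗ₘ η))
    (h_mul_counit : m ≫ ε = (ε ⊗ₘ ε) ≫ (λ_ (𝟙_ C)).hom)
    (h_unit_counit : η ≫ ε = 𝟙 (𝟙_ C))
    (h_antipode_left : Δ ≫ (Γ ▷ A) ≫ m = ε ≫ η)
    (h_antipode_right : Δ ≫ (A ◁ Γ) ≫ m = ε ≫ η)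
    (Γinv : A ⟶ A) (hΓinv' : Γinv ≫ Γ = 𝟙 A)
    (v vinv : 𝟙_ C ⟶ A)
    (W : A ⟶ A)
    (hW : W = (λ_ A).inv ≫ (vinv ▷ A) ≫ m)
    (ω : 𝟙_ C ⟶ A ⊗ A)
    (hω : ω = v ≫ Δ ≫ (W ⊗ₘ W))
    (h_pairing : ω ≫ (A ◁ Δ) =
      ω ≫ ((ρ_ A).inv ▷ A) ≫ ((A ◁ ω) ▷ A) ≫ ((α_ A A A).inv ▷ A) ≫ ((m ▷ A) ▷ A) ≫
        (α_ A A A).hom)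
    (μ : A ⟶ 𝟙_ C)
    (h_integral : Δ ≫ (μ ▷ A) ≫ (λ_ A).hom = μ ≫ η)
    (h_mu_antipode : Γ ≫ μ = μ)
    (h_nondeg : ∀ (X : C) (f g : A ⟶ X), ω ≫ (f ▷ A) = ω ≫ (g ▷ A) → f = g)
    (lam : 𝟙_ C ⟶ A) (hlam : lam = ω ≫ (A ◁ μ) ≫ (ρ_ A).hom)
    : ((ρ_ A).inv ≫ (A ◁ lam) ≫ m = ε ≫ lam) ∧ ((λ_ A).inv ≫ (lam ▷ A) ≫ m = ε ≫ lam) := by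
  let _ : MonObj A :=
    { one := η, mul := m, one_mul := h_one_mul, mul_one := h_mul_one, mul_assoc := h_mul_assoc }
  let _ : ComonObj A :=
    { counit := ε, comul := Δ, counit_comul := h_counit_left, comul_counit := h_counit_right,
      comul_assoc := h_comul_assoc.symm }
  let _ : BimonObj A :=
    { mul_comul := h_compat, one_comul := h_unit_comul, mul_counit := h_mul_counit,
      one_counit := h_unit_counit }
  let _ : HopfObj A :=
    { antipode := Γ, antipode_left := h_antipode_left, antipode_right := h_antipode_right }
  have : IsSplitEpi Γ := IsSplitEpi.mk' ⟨Γinv, hΓinv'⟩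
  have hpair : IsOneSidedPairing ω :=
    h_pairing.trans (by simp only [mulLeftLeg, comp_whiskerRight, assoc]; rfl)
  have hnd : IsWeaklyNondegenerate ω := h_nondeg A
  have hε : contractLeft ω ε = η :=
    (contractLeft_counit_eq_contractRight_counit (hω.trans (by rw [hW]; rfl))).trans
      (contractRight_counit hpair hnd)
  have hμ : IsLeftIntegral μ := IsRightIntegral.isLeftIntegral h_integral h_mu_antipode
  subst hlam
  exact ⟨rightMul_contractRight_of_isRightIntegral hpair hnd hε h_integral,
    leftMul_contractRight_of_isLeftIntegral hpair hnd hε hμ⟩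

theorem dual_integral_is_two_sided_integral
    {C : Type u} [Category.{v} C] [MonoidalCategory C] [BraidedCategory C]
    (A : C) (m : A ⊗ A ⟶ A) (η : 𝟙_ C ⟶ A) (Δ : A ⟶ A ⊗ A) (ε : A ⟶ 𝟙_ C) (Γ : A ⟶ A)
    (h_mul_assoc : (m ▷ A) ≫ m = (α_ A A A).hom ≫ (A ◁ m) ≫ m)
    (h_one_mul : (η ▷ A) ≫ m = (λ_ A).hom)
    (h_mul_one : (A ◁ η) ≫ m = (ρ_ A).hom)
    (h_comul_assoc : Δ ≫ (Δ ▷ A) ≫ (α_ A A A).hom = Δ ≫ (A ◁ Δ))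
    (h_counit_left : Δ ≫ (ε ▷ A) = (λ_ A).inv)
    (h_counit_right : Δ ≫ (A ◁ ε) = (ρ_ A).inv)
    (h_compat : m ≫ Δ = (Δ ⊗ₘ Δ) ≫ tensorμ A A A A ≫ (m ⊗ₘ m))
    (h_unit_comul : η ≫ Δ = (λ_ (𝟙_ C)).inv ≫ (η ⊗ₘ η))
    (h_mul_counit : m ≫ ε = (ε ⊗ₘ ε) ≫ (λ_ (𝟙_ C)).hom)
    (h_unit_counit : η ≫ ε = 𝟙 (𝟙_ C))
    (h_antipode_left : Δ ≫ (Γ ▷ A) ≫ m = ε ≫ η)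
    (h_antipode_right : Δ ≫ (A ◁ Γ) ≫ m = ε ≫ η)
    (Γinv : A ⟶ A) (hΓinv : Γ ≫ Γinv = 𝟙 A) (hΓinv' : Γinv ≫ Γ = 𝟙 A)
    (v vinv : 𝟙_ C ⟶ A)
    (h_v_central : (λ_ A).inv ≫ (v ▷ A) ≫ m = (ρ_ A).inv ≫ (A ◁ v) ≫ m)
    (h_v_antipode : v ≫ Γ = v)
    (h_v_inv : (λ_ (𝟙_ C)).inv ≫ (v ⊗ₘ vinv) ≫ m = η)
    (h_inv_v : (λ_ (𝟙_ C)).inv ≫ (vinv ⊗ₘ v) ≫ m = η)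
    (V W : A ⟶ A)
    (hV : V = (λ_ A).inv ≫ (v ▷ A) ≫ m)
    (hW : W = (λ_ A).inv ≫ (vinv ▷ A) ≫ m)
    (ω : 𝟙_ C ⟶ A ⊗ A)
    (hω : ω = v ≫ Δ ≫ (W ⊗ₘ W))
    (h_pairing : ω ≫ (A ◁ Δ) =
      ω ≫ ((ρ_ A).inv ▷ A) ≫ ((A ◁ ω) ▷ A) ≫ ((α_ A A A).inv ▷ A) ≫ ((m ▷ A) ▷ A) ≫
        (α_ A A A).hom)
    (μ : A ⟶ 𝟙_ C)
    (h_integral : Δ ≫ (μ ▷ A) ≫ (λ_ A).hom = μ ≫ η)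
    (h_mu_antipode : Γ ≫ μ = μ)
    (h_nondeg : ∀ (X : C) (f g : A ⟶ X), ω ≫ (f ▷ A) = ω ≫ (g ▷ A) → f = g)
    (lam : 𝟙_ C ⟶ A) (hlam : lam = ω ≫ (A ◁ μ) ≫ (ρ_ A).hom)
    : ((ρ_ A).inv ≫ (A ◁ lam) ≫ m = ε ≫ lam) ∧ ((λ_ A).inv ≫ (lam ▷ A) ≫ m = ε ≫ lam) :=
  dual_integral_is_two_sided_integral_general A m η Δ ε Γ h_mul_assoc h_one_mul h_mul_one
    h_comul_assoc h_counit_left h_counit_right h_compat h_unit_comul h_mul_counit h_unit_counit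
    h_antipode_left h_antipode_right Γinv hΓinv' v vinv W hW ω hω h_pairing μ h_integral
    h_mu_antipode h_nondeg lam hlam
end
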